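/- Let S be a real random variable with the exponential distribution of mean λ > 0, let I > 0 be a constant, let ε ∈ (0,1), and let L > 0. Define T = −λ·ln(1 − ε)/I and γ = S/I. Then: (i) T > 0; (ii) P(γ ≤ T) = ε; (iii) P(γ = T) = 0; and (iv) the average goodput at scheduled rate r = L·log₂(1 + T), namely E[r · 1{r ≤ L·log₂(1 + γ)}], equals (1 − ε) · L · log₂(1 + (−λ·ln(1 − ε))/I). -/

import Mathlib

open MeasureTheory ProbabilityTheory Real

/-- Theorem 1 (D2D receiver): if the signal power `S` is exponential with mean `λ` and the
interference is the constant `I > 0`, then `T = −λ·ln(1−ε)/I` is positive, it is the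
ε-outage SIR threshold of `γ = S/I` (with `P(γ = T) = 0`), and the average goodput at the
scheduled rate `L·log₂(1+T)` equals `(1 − ε)·L·log₂(1 + (−λ·ln(1−ε))/I)`. -/
theorem d2d_average_goodput {Ω : Type*} [MeasurableSpace Ω] (P : Measure Ω)
    [IsProbabilityMeasure P] (S : Ω → ℝ) (hS : Measurable S)
    (lam : ℝ) (hlam : 0 < lam)
    (hlaw : Measure.map S P = expMeasure (1 / lam)) (I : ℝ) (hI : 0 < I)
    (ε : ℝ) (hε : ε ∈ Set.Ioo (0 : ℝ) 1) (L : ℝ) (hL : 0 < L) :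
    0 < -lam * Real.log (1 - ε) / I ∧
    P {ω | S ω / I ≤ -lam * Real.log (1 - ε) / I} = ENNReal.ofReal ε ∧
    P {ω | S ω / I = -lam * Real.log (1 - ε) / I} = 0 ∧
    ∫ ω, ({ω | L * Real.logb 2 (1 + -lam * Real.log (1 - ε) / I)
            ≤ L * Real.logb 2 (1 + S ω / I)}.indicator
        (fun _ => L * Real.logb 2 (1 + -lam * Real.log (1 - ε) / I)) ω) ∂P
      = (1 - ε) * L * Real.logb 2 (1 + (-lam * Real.log (1 - ε)) / I) := by
  obtain ⟨hε0, hε1⟩ := hε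
  have hlog : Real.log (1 - ε) < 0 := Real.log_neg (by linarith) (by linarith)
  set T : ℝ := -lam * Real.log (1 - ε) with hTdef
  have hTpos : 0 < T := by nlinarith
  have hTI : 0 < T / I := div_pos hTpos hI
  have hr : 0 < 1 / lam := by positivity
  -- CDF computation
  have hIic : ∀ x : ℝ, P (S ⁻¹' Set.Iic x)
      = ENNReal.ofReal (if 0 ≤ x then 1 - Real.exp (-((1 / lam) * x)) else 0) := by
    intro x
    rw [← Measure.map_apply hS measurableSet_Iic, hlaw, expMeasure, gammaMeasure,
      withDensity_apply _ measurableSet_Iic]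
    exact lintegral_exponentialPDF_eq_antiDeriv hr x
  have hexp : (1 / lam) * T = -Real.log (1 - ε) := by
    field_simp [hTdef]
    ring
  have hkey : P (S ⁻¹' Set.Iic T) = ENNReal.ofReal ε := by
    rw [hIic, if_pos hTpos.le, hexp, neg_neg, Real.exp_log (by linarith)]
    ring_nf
  -- singleton has measure zero
  have hsing : P (S ⁻¹' {T}) = 0 := by
    rw [← Measure.map_apply hS (measurableSet_singleton T), hlaw, expMeasure, gammaMeasure]
    exact (withDensity_absolutelyContinuous volume _) (measure_singleton T)
  -- S is a.s. nonneg
  have hneg : P (S ⁻¹' Set.Iio 0) = 0 := by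
    rw [← Measure.map_apply hS measurableSet_Iio, hlaw, expMeasure, gammaMeasure,
      withDensity_apply _ measurableSet_Iio]
    exact lintegral_exponentialPDF_of_nonpos le_rfl
  refine ⟨hTI, ?_, ?_, ?_⟩
  · have : {ω | S ω / I ≤ T / I} = S ⁻¹' Set.Iic T := by
      ext ω
      simp [Set.mem_setOf_eq, div_le_div_iff_of_pos_right hI]
    rw [this, hkey]
  · have : {ω | S ω / I = T / I} = S ⁻¹' {T} := by
      ext ω
      simp only [Set.mem_setOf_eq, Set.mem_preimage, Set.mem_singleton_iff]
      constructor
      · intro h; field_simp at h; exact h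
      · intro h; rw [h]
    rw [this, hsing]
  · set c : ℝ := L * Real.logb 2 (1 + T / I) with hcdef
    have hcpos : 0 < c := mul_pos hL (Real.logb_pos one_lt_two (by linarith))
    -- the goodput event agrees a.e. with {T ≤ S}
    have hae : ∀ᵐ ω ∂P, ({ω | c ≤ L * Real.logb 2 (1 + S ω / I)}.indicator
        (fun _ => c) ω) = ((S ⁻¹' Set.Ici T).indicator (fun _ => c) ω) := by
      have h0 : ∀ᵐ ω ∂P, ¬ (S ω < 0) := by
        rw [ae_iff]
        simpa [Set.preimage, Set.mem_Iio] using hneg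
      filter_upwards [h0] with ω h0ω
      have hSnn : 0 ≤ S ω := not_lt.mp h0ω
      have h1 : (0 : ℝ) < 1 + S ω / I := by positivity
      have hiff : c ≤ L * Real.logb 2 (1 + S ω / I) ↔ T ≤ S ω := by
        rw [hcdef, mul_le_mul_iff_right₀ hL,
          Real.logb_le_logb one_lt_two (by linarith) h1]
        constructor
        · intro h
          exact (div_le_div_iff_of_pos_right hI).mp (by linarith)
        · intro h
          have := (div_le_div_iff_of_pos_right hI).mpr h
          linarith
      by_cases h : T ≤ S ω
      · rw [Set.indicator_of_mem (show ω ∈ {ω | c ≤ L * Real.logb 2 (1 + S ω / I)} from hiff.mpr h),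
          Set.indicator_of_mem (show ω ∈ S ⁻¹' Set.Ici T from h)]
      · rw [Set.indicator_of_notMem (show ω ∉ {ω | c ≤ L * Real.logb 2 (1 + S ω / I)} from
            fun hc' => h (hiff.mp hc')),
          Set.indicator_of_notMem (show ω ∉ S ⁻¹' Set.Ici T from h)]
    rw [integral_congr_ae hae, integral_indicator_const c (hS measurableSet_Ici)]
    -- compute P (S ⁻¹' Ici T)
    have hIio : P (S ⁻¹' Set.Iio T) = ENNReal.ofReal ε := by
      refine le_antisymm (hkey ▸ measure_mono (Set.preimage_mono Set.Iio_subset_Iic_self)) ?_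
      calc ENNReal.ofReal ε = P (S ⁻¹' Set.Iic T) := hkey.symm
        _ ≤ P (S ⁻¹' Set.Iio T ∪ S ⁻¹' {T}) := by
            rw [← Set.preimage_union, Set.Iio_union_right]
        _ ≤ P (S ⁻¹' Set.Iio T) + P (S ⁻¹' {T}) := measure_union_le _ _
        _ = P (S ⁻¹' Set.Iio T) := by rw [hsing, add_zero]
    have hIci : P (S ⁻¹' Set.Ici T) = 1 - ENNReal.ofReal ε := by
      have hc := measure_compl (s := S ⁻¹' Set.Iio T) (hS measurableSet_Iio) (measure_ne_top P _)
      rw [measure_univ, hIio] at hc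
      rw [← hc, ← Set.preimage_compl, Set.compl_Iio]
    rw [measureReal_def, hIci]
    have htr : ((1 : ENNReal) - ENNReal.ofReal ε).toReal = 1 - ε := by
      rw [← ENNReal.ofReal_one, ← ENNReal.ofReal_sub _ hε0.le,
        ENNReal.toReal_ofReal (by linarith)]
    rw [htr, smul_eq_mul, hcdef]
    ring
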